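/- Consider the free ℤ-module with basis {e₁, e₂, g} equipped with the symmetric bilinear form determined by e₁·e₁ = e₂·e₂ = −1, g·g = 0, e₁·e₂ = 0, e₁·g = e₂·g = 1. The ℤ-linear map σ with σ(e₁) = −e₁ + 2e₂ + 2g, σ(e₂) = e₂, σ(g) = g is an involution that preserves this bilinear form. -/
import Mathlib


theorem stmt_14 (B : (Fin 3 → ℤ) →ₗ[ℤ] (Fin 3 → ℤ) →ₗ[ℤ] ℤ)
    (σ : (Fin 3 → ℤ) →ₗ[ℤ] (Fin 3 → ℤ))
    (e₁ e₂ g : Fin 3 → ℤ)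
    (he₁ : e₁ = Pi.single 0 1) (he₂ : e₂ = Pi.single 1 1) (hg : g = Pi.single 2 1)
    (hsymm : ∀ x y, B x y = B y x)
    (h11 : B e₁ e₁ = -1) (h22 : B e₂ e₂ = -1) (hgg : B g g = 0)
    (h12 : B e₁ e₂ = 0) (h1g : B e₁ g = 1) (h2g : B e₂ g = 1)
    (hσ1 : σ e₁ = -e₁ + 2 • e₂ + 2 • g) (hσ2 : σ e₂ = e₂) (hσg : σ g = g) :
    σ ∘ₗ σ = LinearMap.id ∧ ∀ x y, B (σ x) (σ y) = B x y := by
  have hbasis : ∀ x : Fin 3 → ℤ, x = x 0 • e₁ + x 1 • e₂ + x 2 • g := by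
    intro x; funext i
    subst he₁ he₂ hg
    fin_cases i <;> simp
  have key : ∀ x : Fin 3 → ℤ, σ x = x 0 • σ e₁ + x 1 • σ e₂ + x 2 • σ g := by
    intro x
    conv_lhs => rw [hbasis x]
    simp only [map_add, map_smul]
  -- components of σ x
  have hc0 : ∀ x : Fin 3 → ℤ, σ x 0 = -x 0 := by
    intro x; rw [key x, hσ1, hσ2, hσg]
    subst he₁ he₂ hg; simp
  have hc1 : ∀ x : Fin 3 → ℤ, σ x 1 = 2 * x 0 + x 1 := by
    intro x; rw [key x, hσ1, hσ2, hσg]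
    subst he₁ he₂ hg; simp; ring
  have hc2 : ∀ x : Fin 3 → ℤ, σ x 2 = 2 * x 0 + x 2 := by
    intro x; rw [key x, hσ1, hσ2, hσg]
    subst he₁ he₂ hg; simp; ring
  have hB : ∀ x y : Fin 3 → ℤ, B x y =
      -(x 0 * y 0) - x 1 * y 1 + x 0 * y 2 + x 2 * y 0 + x 1 * y 2 + x 2 * y 1 := by
    intro x y
    conv_lhs => rw [hbasis x, hbasis y]
    simp only [map_add, map_smul, LinearMap.add_apply, LinearMap.smul_apply, smul_eq_mul,
      h11, h22, hgg, h12, h1g, h2g, hsymm e₂ e₁, hsymm g e₁, hsymm g e₂]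
    ring
  constructor
  · apply LinearMap.ext; intro x
    have h := hbasis (σ (σ x))
    rw [hc0, hc1, hc2, hc0, hc1, hc2] at h
    simp only [LinearMap.comp_apply, LinearMap.id_apply]
    rw [h]
    conv_rhs => rw [hbasis x]
    match_scalars <;> ring
  · intro x y
    rw [hB (σ x) (σ y), hB x y, hc0, hc1, hc2, hc0, hc1, hc2]
    ring
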